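/- For the classical density proportional to e^{δx − εz²/2} on the unit sphere, the mean of x satisfies the expansion ⟨x⟩ = δ/3 + δε/45 + O(3) (up to terms of third order in δ and ε jointly). -/

import Mathlib

open Asymptotics
noncomputable section

/-- Normalizing integral `∫_S e^{δx − εz²/2} dS` over the unit sphere, in
spherical coordinates. -/
def sphDen (δ ε : ℝ) : ℝ :=
  ∫ θ in (0 : ℝ)..Real.pi, ∫ φ in (0 : ℝ)..(2 * Real.pi),
    Real.sin θ *
      Real.exp (δ * (Real.sin θ * Real.cos φ) - ε * Real.cos θ ^ 2 / 2)

/-- Mean of the observable `g(x,z)` (with `x = sinθ cosφ`, `z = cosθ`) for the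
classical density proportional to `e^{δx − εz²/2}` on the unit sphere. -/
def sphAvg (g : ℝ → ℝ → ℝ) (δ ε : ℝ) : ℝ :=
  (∫ θ in (0 : ℝ)..Real.pi, ∫ φ in (0 : ℝ)..(2 * Real.pi),
      Real.sin θ * g (Real.sin θ * Real.cos φ) (Real.cos θ) *
        Real.exp (δ * (Real.sin θ * Real.cos φ) - ε * Real.cos θ ^ 2 / 2))
    / sphDen δ ε

/-!
With `u = δx − εz²/2` and `c = δ/3 + δε/45` we have `⟨x⟩ − c = ∫(x − c)eᵘ / ∫eᵘ`, and the
denominator stays near `4π`. Replacing `eᵘ` by `1 + u + u²/2` costs `O(|u|³)`; what is left is a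
combination of the sphere moments of `1, x², z², x²z², z⁴`, and `c` is precisely the value for
which its terms of order one and two cancel.
-/

open Real intervalIntegral
open MeasureTheory (volume)

lemma integral_cubic_cos (a₀ a₁ a₂ a₃ : ℝ) :
    ∫ φ in (0 : ℝ)..(2 * π), (a₀ + a₁ * cos φ + a₂ * cos φ ^ 2 + a₃ * cos φ ^ 3) =
      2 * π * a₀ + π * a₂ := by
  have hderiv (φ : ℝ) : HasDerivAt
      (fun φ => a₀ * φ + a₁ * sin φ + a₂ * (φ + sin φ * cos φ) / 2 + a₃ * (sin φ - sin φ ^ 3 / 3))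
      (a₀ + a₁ * cos φ + a₂ * cos φ ^ 2 + a₃ * cos φ ^ 3) φ := by
    have hs := hasDerivAt_sin φ
    refine (((((hasDerivAt_id φ).const_mul a₀).add (hs.const_mul a₁)).add
      ((((hasDerivAt_id φ).add (hs.mul (hasDerivAt_cos φ))).const_mul a₂).div_const 2)).add
      ((hs.sub ((hs.pow 3).div_const 3)).const_mul a₃)).congr_deriv ?_
    norm_num
    linear_combination (-a₂ / 2 - a₃ * cos φ) * sin_sq_add_cos_sq φ
  rw [integral_eq_sub_of_hasDerivAt (fun φ _ => hderiv φ)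
    (Continuous.intervalIntegrable (by fun_prop) _ _)]
  simp
  ring

lemma integral_sin_mul_quartic_cos (b₀ b₂ b₄ : ℝ) :
    ∫ θ in (0 : ℝ)..π, sin θ * (b₀ + b₂ * cos θ ^ 2 + b₄ * cos θ ^ 4) =
      2 * b₀ + 2 / 3 * b₂ + 2 / 5 * b₄ := by
  have hderiv (θ : ℝ) : HasDerivAt
      (fun θ => -(b₀ * cos θ + b₂ * cos θ ^ 3 / 3 + b₄ * cos θ ^ 5 / 5))
      (sin θ * (b₀ + b₂ * cos θ ^ 2 + b₄ * cos θ ^ 4)) θ := by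
    have hc := hasDerivAt_cos θ
    refine (((hc.const_mul b₀).add (((hc.pow 3).const_mul b₂).div_const 3)).add
      (((hc.pow 5).const_mul b₄).div_const 5)).neg.congr_deriv ?_
    norm_num
    ring
  rw [integral_eq_sub_of_hasDerivAt (fun θ _ => hderiv θ)
    (Continuous.intervalIntegrable (by fun_prop) _ _)]
  norm_num
  ring

/-- `∫_S f dS` in the spherical coordinates of `sphDen`. -/
def sphInt (f : ℝ → ℝ → ℝ) : ℝ :=
  ∫ θ in (0 : ℝ)..π, ∫ φ in (0 : ℝ)..(2 * π), sin θ * f θ φ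

section sphInt

variable {f g : ℝ → ℝ → ℝ}

lemma intervalIntegrable_sphInt_inner (hf : Continuous fun q : ℝ × ℝ => f q.1 q.2) (θ : ℝ) :
    IntervalIntegrable (fun φ => sin θ * f θ φ) volume 0 (2 * π) :=
  (by fun_prop : Continuous fun φ => sin θ * f θ φ).intervalIntegrable _ _

lemma intervalIntegrable_sphInt_outer (hf : Continuous fun q : ℝ × ℝ => f q.1 q.2) :
    IntervalIntegrable (fun θ => ∫ φ in (0 : ℝ)..(2 * π), sin θ * f θ φ) volume 0 π :=
  (continuous_parametric_intervalIntegral_of_continuous' (by fun_prop) _ _).intervalIntegrable _ _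

lemma sphInt_sub (hf : Continuous fun q : ℝ × ℝ => f q.1 q.2)
    (hg : Continuous fun q : ℝ × ℝ => g q.1 q.2) :
    sphInt (fun θ φ => f θ φ - g θ φ) = sphInt f - sphInt g := by
  rw [sphInt, sphInt, sphInt, ← integral_sub (intervalIntegrable_sphInt_outer hf)
    (intervalIntegrable_sphInt_outer hg)]
  refine integral_congr fun θ _ => ?_
  simp only [mul_sub]
  exact integral_sub (intervalIntegrable_sphInt_inner hf θ) (intervalIntegrable_sphInt_inner hg θ)

lemma sphInt_const_mul (c : ℝ) (f : ℝ → ℝ → ℝ) :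
    sphInt (fun θ φ => c * f θ φ) = c * sphInt f := by
  rw [sphInt, sphInt, ← integral_const_mul]
  refine integral_congr fun θ _ => ?_
  simp only [mul_left_comm (sin θ) c]
  exact integral_const_mul _ _

lemma sphInt_const (m : ℝ) : sphInt (fun _ _ => m) = 4 * π * m := by
  have hsin : ∫ θ in (0 : ℝ)..π, sin θ = 2 := by norm_num
  simp only [sphInt, integral_const_mul, hsin, mul_comm (sin _),
    integral_const, smul_eq_mul, sub_zero]
  ring

lemma abs_sphInt_le {C : ℝ} (h : ∀ θ φ, |f θ φ| ≤ C) : |sphInt f| ≤ 2 * π ^ 2 * C := by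
  have hinner (θ : ℝ) : ‖∫ φ in (0 : ℝ)..(2 * π), sin θ * f θ φ‖ ≤ C * |2 * π - 0| := by
    refine norm_integral_le_of_norm_le_const fun φ _ => ?_
    rw [norm_mul, Real.norm_eq_abs, Real.norm_eq_abs]
    exact (mul_le_of_le_one_left (abs_nonneg _) (abs_sin_le_one θ)).trans (h θ φ)
  have := norm_integral_le_of_norm_le_const (a := 0) (b := π) fun θ _ => hinner θ
  rw [Real.norm_eq_abs, sub_zero, sub_zero, abs_of_pos pi_pos,
    abs_of_pos (by positivity : 0 < 2 * π)] at this
  simpa only [sphInt, mul_comm, mul_left_comm, sq, mul_assoc] using this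

lemma le_sphInt {m : ℝ} (hf : Continuous fun q : ℝ × ℝ => f q.1 q.2) (h : ∀ θ φ, m ≤ f θ φ) :
    4 * π * m ≤ sphInt f := by
  rw [← sphInt_const]
  have hm : Continuous fun _ : ℝ × ℝ => m := continuous_const
  refine integral_mono_on pi_pos.le (intervalIntegrable_sphInt_outer (f := fun _ _ => m) hm)
    (intervalIntegrable_sphInt_outer hf) fun θ hθ => ?_
  refine integral_mono_on (by positivity) (intervalIntegrable_sphInt_inner (f := fun _ _ => m) hm θ)
    (intervalIntegrable_sphInt_inner hf θ) fun φ _ => ?_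
  exact mul_le_mul_of_nonneg_left (h θ φ) (sin_nonneg_of_nonneg_of_le_pi hθ.1 hθ.2)

end sphInt

def sphExponent (δ ε θ φ : ℝ) : ℝ := δ * (sin θ * cos φ) - ε * cos θ ^ 2 / 2

@[fun_prop]
lemma Continuous.sphExponent {α : Type*} [TopologicalSpace α] {f g : α → ℝ} (δ ε : ℝ)
    (hf : Continuous f) (hg : Continuous g) :
    Continuous fun a => sphExponent δ ε (f a) (g a) := by
  unfold _root_.sphExponent
  fun_prop

/- Expanded in powers of `cos φ`, the integrands leave only `1` and `cos² φ` after the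
φ-integral, and `sin² θ = 1 − cos² θ` turns the θ-integrand into `sin θ` times a polynomial
in `cos² θ`. -/
section moments

variable (δ ε : ℝ)

lemma sphInt_one_add_sphExponent_add_sq :
    sphInt (fun θ φ => 1 + sphExponent δ ε θ φ + sphExponent δ ε θ φ ^ 2 / 2) =
      4 * π * (1 - ε / 6 + δ ^ 2 / 6 + ε ^ 2 / 40) := by
  have hinner (θ : ℝ) :
      ∫ φ in (0 : ℝ)..(2 * π), sin θ * (1 + sphExponent δ ε θ φ + sphExponent δ ε θ φ ^ 2 / 2) =
        sin θ * (2 * π + π * δ ^ 2 / 2 + -(π * ε + π * δ ^ 2 / 2) * cos θ ^ 2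
          + π * ε ^ 2 / 4 * cos θ ^ 4) := by
    set w := ε * cos θ ^ 2 / 2
    rw [integral_congr (g := fun φ => sin θ * (1 - w + w ^ 2 / 2) + sin θ ^ 2 * δ * (1 - w) * cos φ
      + sin θ ^ 3 * δ ^ 2 / 2 * cos φ ^ 2 + 0 * cos φ ^ 3) fun φ _ => by unfold sphExponent; ring,
      integral_cubic_cos]
    linear_combination π * sin θ * δ ^ 2 / 2 * sin_sq_add_cos_sq θ
  rw [sphInt, integral_congr fun θ _ => hinner θ, integral_sin_mul_quartic_cos]
  ring

lemma sphInt_x_mul_one_add_sphExponent_add_sq :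
    sphInt (fun θ φ => sin θ * cos φ * (1 + sphExponent δ ε θ φ + sphExponent δ ε θ φ ^ 2 / 2)) =
      4 * π * (δ / 3 - δ * ε / 30) := by
  have hinner (θ : ℝ) :
      ∫ φ in (0 : ℝ)..(2 * π),
          sin θ * (sin θ * cos φ * (1 + sphExponent δ ε θ φ + sphExponent δ ε θ φ ^ 2 / 2)) =
        sin θ * (π * δ + -(π * δ + π * δ * ε / 2) * cos θ ^ 2 + π * δ * ε / 2 * cos θ ^ 4) := by
    set w := ε * cos θ ^ 2 / 2
    rw [integral_congr (g := fun φ => 0 + sin θ ^ 2 * (1 - w + w ^ 2 / 2) * cos φ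
      + sin θ ^ 3 * δ * (1 - w) * cos φ ^ 2 + sin θ ^ 4 * δ ^ 2 / 2 * cos φ ^ 3)
      fun φ _ => by unfold sphExponent; ring, integral_cubic_cos]
    linear_combination π * sin θ * δ * (1 - w) * sin_sq_add_cos_sq θ
  rw [sphInt, integral_congr fun θ _ => hinner θ, integral_sin_mul_quartic_cos]
  ring

end moments

lemma abs_exp_sub_quadratic_le {u : ℝ} (h : |u| ≤ 1) : |exp u - (1 + u + u ^ 2 / 2)| ≤ |u| ^ 3 := by
  have hb := Real.exp_bound h (n := 3) (by norm_num)
  have hs : (∑ m ∈ Finset.range 3, u ^ m / m.factorial) = 1 + u + u ^ 2 / 2 := by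
    norm_num [Finset.sum_range_succ, Nat.factorial]
  rw [hs] at hb
  refine hb.trans ?_
  norm_num [Nat.factorial]
  nlinarith [pow_nonneg (abs_nonneg u) 3]

lemma abs_sin_mul_cos_le_one (θ φ : ℝ) : |sin θ * cos φ| ≤ 1 := by
  rw [abs_mul]
  exact mul_le_one₀ (abs_sin_le_one θ) (abs_nonneg _) (abs_cos_le_one φ)

lemma abs_sphExponent_le (δ ε θ φ : ℝ) : |sphExponent δ ε θ φ| ≤ |δ| + |ε| := by
  have hz : |cos θ ^ 2 / 2| ≤ 1 := by
    rw [abs_div, abs_pow, abs_two]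
    nlinarith [abs_cos_le_one θ, abs_nonneg (cos θ)]
  rw [sphExponent, mul_div_assoc]
  refine (abs_sub _ _).trans (add_le_add ?_ ?_) <;> rw [abs_mul]
  exacts [mul_le_of_le_one_right (abs_nonneg _) (abs_sin_mul_cos_le_one θ φ),
    mul_le_of_le_one_right (abs_nonneg _) hz]

lemma sphAvg_eq_sphInt_div (g : ℝ → ℝ → ℝ) (δ ε : ℝ) :
    sphAvg g δ ε =
      sphInt (fun θ φ => g (sin θ * cos φ) (cos θ) * exp (sphExponent δ ε θ φ)) / sphDen δ ε := by
  unfold sphAvg sphInt sphExponent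
  simp only [mul_assoc]

lemma sphDen_eq_sphInt (δ ε : ℝ) : sphDen δ ε = sphInt fun θ φ => exp (sphExponent δ ε θ φ) :=
  rfl

lemma four_pi_mul_exp_neg_le_sphDen (δ ε : ℝ) : 4 * π * exp (-(|δ| + |ε|)) ≤ sphDen δ ε :=
  le_sphInt (by fun_prop) fun θ φ => exp_le_exp.2 (neg_le_of_abs_le (abs_sphExponent_le δ ε θ φ))

lemma sphAvg_x_sub_eq (δ ε c : ℝ) :
    sphAvg (fun x _ => x) δ ε - c =
      (4 * π * ((δ / 3 - δ * ε / 30) - c * (1 - ε / 6 + δ ^ 2 / 6 + ε ^ 2 / 40))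
        + sphInt (fun θ φ => (sin θ * cos φ - c) *
            (exp (sphExponent δ ε θ φ) - (1 + sphExponent δ ε θ φ + sphExponent δ ε θ φ ^ 2 / 2))))
        / sphDen δ ε := by
  have hZ : 0 < sphDen δ ε := lt_of_lt_of_le (by positivity) (four_pi_mul_exp_neg_le_sphDen δ ε)
  have hsplit : sphInt (fun θ φ => (sin θ * cos φ - c) *
      (exp (sphExponent δ ε θ φ) - (1 + sphExponent δ ε θ φ + sphExponent δ ε θ φ ^ 2 / 2))) =
      (sphInt (fun θ φ => sin θ * cos φ * exp (sphExponent δ ε θ φ))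
          - c * sphInt fun θ φ => exp (sphExponent δ ε θ φ))
        - (sphInt (fun θ φ => sin θ * cos φ *
              (1 + sphExponent δ ε θ φ + sphExponent δ ε θ φ ^ 2 / 2))
          - c * sphInt fun θ φ => 1 + sphExponent δ ε θ φ + sphExponent δ ε θ φ ^ 2 / 2) := by
    rw [← sphInt_const_mul, ← sphInt_const_mul, ← sphInt_sub, ← sphInt_sub, ← sphInt_sub]
    · congr 1
      ext θ φ
      ring
    all_goals fun_prop
  rw [hsplit, sphInt_x_mul_one_add_sphExponent_add_sq, sphInt_one_add_sphExponent_add_sq,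
    sphAvg_eq_sphInt_div, ← sphDen_eq_sphInt, eq_div_iff hZ.ne']
  field_simp
  ring

lemma abs_sphInt_centered_exp_remainder_le {δ ε : ℝ} (c : ℝ) (h : |δ| + |ε| ≤ 1) :
    |sphInt (fun θ φ => (sin θ * cos φ - c) *
        (exp (sphExponent δ ε θ φ) - (1 + sphExponent δ ε θ φ + sphExponent δ ε θ φ ^ 2 / 2)))|
      ≤ 2 * π ^ 2 * ((1 + |c|) * (|δ| + |ε|) ^ 3) := by
  refine abs_sphInt_le fun θ φ => ?_
  have hu := abs_sphExponent_le δ ε θ φ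
  rw [abs_mul]
  exact mul_le_mul ((abs_sub _ _).trans (add_le_add_left (abs_sin_mul_cos_le_one θ φ) _))
    ((abs_exp_sub_quadratic_le (hu.trans h)).trans (pow_le_pow_left₀ (abs_nonneg _) hu 3))
    (abs_nonneg _) (by positivity)

lemma abs_centered_moment_le {δ ε n : ℝ} (hδ : |δ| ≤ n) (hε : |ε| ≤ n) (hn : n ≤ 1) :
    |(δ / 3 - δ * ε / 30) - (δ / 3 + δ * ε / 45) * (1 - ε / 6 + δ ^ 2 / 6 + ε ^ 2 / 40)|
      ≤ n ^ 3 := by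
  have hδ2 : δ ^ 2 ≤ n ^ 2 := sq_le_sq' (abs_le.1 hδ).1 (abs_le.1 hδ).2
  have hε2 : ε ^ 2 ≤ n ^ 2 := sq_le_sq' (abs_le.1 hε).1 (abs_le.1 hε).2
  obtain ⟨hε₁, hε₂⟩ := abs_le.1 (hε.trans hn)
  have hcubic : |δ ^ 2 / 18 + ε ^ 2 / 216 + δ ^ 2 * ε / 270 + ε ^ 3 / 1800| ≤ n ^ 2 := by
    rw [abs_le]
    constructor <;> nlinarith [mul_nonneg (sq_nonneg δ) (by linarith : 0 ≤ 1 - ε),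
      mul_nonneg (sq_nonneg δ) (by linarith : 0 ≤ 1 + ε),
      mul_nonneg (sq_nonneg ε) (by linarith : 0 ≤ 1 - ε),
      mul_nonneg (sq_nonneg ε) (by linarith : 0 ≤ 1 + ε)]
  calc _ = |δ| * |δ ^ 2 / 18 + ε ^ 2 / 216 + δ ^ 2 * ε / 270 + ε ^ 3 / 1800| := by
        rw [← abs_mul, ← abs_neg]
        ring_nf
    _ ≤ n * n ^ 2 := mul_le_mul hδ hcubic (abs_nonneg _) ((abs_nonneg _).trans hδ)
    _ = n ^ 3 := by ring

lemma abs_sphAvg_x_sub_le {δ ε n : ℝ} (hδ : |δ| ≤ n) (hε : |ε| ≤ n) (hn : n ≤ 1 / 4) :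
    |sphAvg (fun x _ => x) δ ε - (δ / 3 + δ * ε / 45)| ≤ (2 + 16 * π) * n ^ 3 := by
  have hn₀ : 0 ≤ n := (abs_nonneg δ).trans hδ
  have hsum : |δ| + |ε| ≤ 2 * n := by linarith
  have hc : |δ / 3 + δ * ε / 45| ≤ 1 := by
    rw [abs_le]; constructor <;> nlinarith [abs_le.1 hδ, abs_le.1 hε]
  have hZ : 2 * π ≤ sphDen δ ε := by
    nlinarith [four_pi_mul_exp_neg_le_sphDen δ ε, add_one_le_exp (-(|δ| + |ε|)), pi_pos]
  have hQ := abs_centered_moment_le hδ hε (by linarith)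
  have hR : 2 * π ^ 2 * ((1 + |δ / 3 + δ * ε / 45|) * (|δ| + |ε|) ^ 3) ≤ 32 * π ^ 2 * n ^ 3 := by
    have : (1 + |δ / 3 + δ * ε / 45|) * (|δ| + |ε|) ^ 3 ≤ 2 * (2 * n) ^ 3 :=
      mul_le_mul (by linarith) (pow_le_pow_left₀ (by positivity) hsum 3) (by positivity)
        (by norm_num)
    nlinarith [pi_pos]
  have hZ' : (2 + 16 * π) * n ^ 3 * (2 * π) ≤ (2 + 16 * π) * n ^ 3 * sphDen δ ε :=
    mul_le_mul_of_nonneg_left hZ (by positivity)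
  rw [sphAvg_x_sub_eq, abs_div, abs_of_pos (by linarith [pi_pos] : 0 < sphDen δ ε),
    div_le_iff₀ (by linarith [pi_pos])]
  refine (abs_add_le _ _).trans ?_
  rw [abs_mul, abs_of_pos (by positivity : 0 < 4 * π)]
  nlinarith [pi_pos, abs_sphInt_centered_exp_remainder_le (δ := δ) (ε := ε)
    (δ / 3 + δ * ε / 45) (by linarith)]

/-- the expansion `⟨x⟩ = δ/3 + δε/45 + O(3)` of the mean of `x`
for the classical density `∝ e^{δx − εz²/2}` on the unit sphere, up to terms
of third order in `(δ, ε)` jointly. -/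
theorem mean_x_expansion :
    (fun p : ℝ × ℝ => sphAvg (fun x _ => x) p.1 p.2 - (p.1 / 3 + p.1 * p.2 / 45))
      =O[nhds (0 : ℝ × ℝ)] fun p : ℝ × ℝ => ‖p‖ ^ 3 := by
  refine IsBigO.of_bound (2 + 16 * π) ?_
  filter_upwards [Metric.ball_mem_nhds (0 : ℝ × ℝ) (by norm_num : (0 : ℝ) < 1 / 4)] with p hp
  rw [Real.norm_eq_abs, norm_pow, norm_norm]
  exact abs_sphAvg_x_sub_le (norm_fst_le p) (norm_snd_le p) (mem_ball_zero_iff.1 hp).le
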